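/- Let F → E → B be a fibration of path-connected CW-complexes. Then TC(E) + 1 ≤ (cat(B × B) + 1)(TC(F) + 1). -/

import Mathlib

/-!
Cover `B × B` by `n + 1` open sets `Uᵢ`, each contractible in `B × B`, and `F × F` by `m + 1` open
sets `Vⱼ` carrying motion planners. Over `Zᵢ = (p × p)⁻¹ Uᵢ`, lifting a contraction of `Uᵢ` onto
`(b₀, b₀)` deforms both projections `Zᵢ → E` into the fibre, giving `φᵢ : Zᵢ → F × F`. On
`φᵢ⁻¹ Vⱼ` the two projections are then homotopic through `F`, which is a motion planner, and these
`(n + 1)(m + 1)` open sets cover `E × E`.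
-/

open unitInterval Set ContinuousMap

universe u

/-- `X` admits a cover by `n+1` open sets, each contractible in `X`. -/
def NullCover (X : Type*) [TopologicalSpace X] (n : ℕ) : Prop :=
  ∃ U : Fin (n + 1) → Set X, (∀ i, IsOpen (U i)) ∧ (⋃ i, U i) = Set.univ ∧
    ∀ i, (⟨Subtype.val, continuous_subtype_val⟩ : C(U i, X)).Nullhomotopic

/-- The (reduced) Lusternik-Schnirelmann category, as an extended natural number. -/
noncomputable def LScat (X : Type*) [TopologicalSpace X] : ℕ∞ :=
  sInf ((fun n : ℕ => (n : ℕ∞)) '' {n : ℕ | NullCover X n})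

/-- `X × X` admits a cover by `n+1` open sets, on each of which the free path
fibration `ev₀,₁ : Xᴵ → X × X` admits a continuous section. -/
def TCCover (X : Type*) [TopologicalSpace X] (n : ℕ) : Prop :=
  ∃ U : Fin (n + 1) → Set (X × X), (∀ i, IsOpen (U i)) ∧ (⋃ i, U i) = Set.univ ∧
    ∀ i, ∃ s : C(U i, C(I, X)),
      ∀ p : U i, (s p) 0 = (p : X × X).1 ∧ (s p) 1 = (p : X × X).2

/-- Farber's (reduced) topological complexity, as an extended natural number. -/
noncomputable def TopComplexity (X : Type*) [TopologicalSpace X] : ℕ∞ :=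
  sInf ((fun n : ℕ => (n : ℕ∞)) '' {n : ℕ | TCCover X n})

/-- A Hurewicz fibration: a map with the homotopy lifting property with respect to
all spaces. -/
def IsHurewiczFibration {E B : Type u} [TopologicalSpace E] [TopologicalSpace B]
    (p : C(E, B)) : Prop :=
  ∀ (Z : Type u) [TopologicalSpace Z] (h₀ : C(Z, E)) (H : C(Z × I, B)),
    (∀ z, H (z, 0) = p (h₀ z)) →
    ∃ G : C(Z × I, E), (∀ zt : Z × I, p (G zt) = H zt) ∧ ∀ z, G (z, 0) = h₀ z

/-- `X` is a CW-complex: it is homeomorphic to the realization of a CW-complex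
structure in the sense of Mathlib. -/
def HasCWStructure (X : Type u) [TopologicalSpace X] : Prop :=
  ∃ (Y : TopCat.{u}) (_ : TopCat.CWComplex.{u} Y), Nonempty (↑Y ≃ₜ X)

section Homotopy

variable {X Y Z : Type*} [TopologicalSpace X] [TopologicalSpace Y] [TopologicalSpace Z]

theorem ContinuousMap.Nullhomotopic.homotopic_const [PathConnectedSpace Y] {f : C(X, Y)}
    (hf : f.Nullhomotopic) (y : Y) : f.Homotopic (const X y) := by
  obtain ⟨y', hy'⟩ := hf
  cases isEmpty_or_nonempty X
  · exact Subsingleton.elim f (const X y) ▸ .refl _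
  · exact hy'.trans (homotopic_const_iff.mpr (PathConnectedSpace.joined y' y))

theorem ContinuousMap.Homotopic.restrict {f g : C(X, Y)} (h : f.Homotopic g) (s : Set X) :
    (f.restrict s).Homotopic (g.restrict s) :=
  h.comp (.refl ((ContinuousMap.id X).restrict s))

theorem exists_motionPlanner_iff_homotopic (A : Set (X × X)) :
    (∃ s : C(A, C(I, X)), ∀ x : A, s x 0 = x.1.1 ∧ s x 1 = x.1.2) ↔
      (fst.restrict A).Homotopic (snd.restrict A) := by
  constructor
  · rintro ⟨s, hs⟩
    exact ⟨{ toContinuousMap := s.uncurry.comp prodSwap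
             map_zero_left := fun x => (hs x).1
             map_one_left := fun x => (hs x).2 }⟩
  · rintro ⟨F⟩
    exact ⟨(F.toContinuousMap.comp prodSwap).curry, fun x => ⟨F.apply_zero x, F.apply_one x⟩⟩

theorem ContinuousMap.Homotopic.restrict_preimage_prodMk {F : Type*} [TopologicalSpace F]
    {a₁ a₂ : C(Z, X)} {ι : C(F, X)} {φ₁ φ₂ : C(Z, F)} (h₁ : a₁.Homotopic (ι.comp φ₁))
    (h₂ : a₂.Homotopic (ι.comp φ₂)) {V : Set (F × F)}
    (hV : (fst.restrict V).Homotopic (snd.restrict V)) :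
    (a₁.restrict (φ₁.prodMk φ₂ ⁻¹' V)).Homotopic (a₂.restrict (φ₁.prodMk φ₂ ⁻¹' V)) :=
  have hι : (ι.comp ((fst.restrict V).comp ((φ₁.prodMk φ₂).restrictPreimage V))).Homotopic
      (ι.comp ((snd.restrict V).comp ((φ₁.prodMk φ₂).restrictPreimage V))) :=
    (Homotopic.refl ι).comp (hV.comp (.refl _))
  ((h₁.restrict _).trans hι).trans (h₂.restrict _).symm

theorem ContinuousMap.Homotopic.restrict_image_val {W : Set X} {S : Set W} {f g : C(X, Y)}
    (h : ((f.restrict W).restrict S).Homotopic ((g.restrict W).restrict S)) :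
    (f.restrict (Subtype.val '' S)).Homotopic (g.restrict (Subtype.val '' S)) := by
  have hmem (x : Subtype.val '' S) : ∃ hx : x.1 ∈ W, ⟨x.1, hx⟩ ∈ S := by
    simpa only [Subtype.coe_image, mem_ofPred_eq] using x.2
  let r : C(Subtype.val '' S, S) :=
    ⟨fun x => ⟨⟨x, (hmem x).1⟩, (hmem x).2⟩, by fun_prop⟩
  exact h.comp (.refl r)

end Homotopy

theorem IsHurewiczFibration.exists_homotopic_into_fiber {E B : Type u} [TopologicalSpace E]
    [TopologicalSpace B] {p : C(E, B)} (hp : IsHurewiczFibration p) {Z : Type u}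
    [TopologicalSpace Z] {f : C(Z, E)} {b₀ : B} (hf : (p.comp f).Homotopic (const Z b₀)) :
    ∃ g : C(Z, p ⁻¹' {b₀}), f.Homotopic (((ContinuousMap.id E).restrict _).comp g) := by
  obtain ⟨H⟩ := hf
  obtain ⟨G, hGp, hG₀⟩ := hp Z f (H.toContinuousMap.comp prodSwap) fun z => H.apply_zero z
  have hG₁ (z : Z) : G (z, 1) ∈ p ⁻¹' {b₀} := (hGp (z, 1)).trans (H.apply_one z)
  exact ⟨⟨fun z => ⟨G (z, 1), hG₁ z⟩, by fun_prop⟩,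
    ⟨{ toContinuousMap := G.comp prodSwap
       map_zero_left := hG₀
       map_one_left := fun _ => rfl }⟩⟩

section Cover

variable {X : Type*} [TopologicalSpace X]

theorem tcCover_of_prod {n m : ℕ} {W : Fin (n + 1) → Fin (m + 1) → Set (X × X)}
    (hWo : ∀ i j, IsOpen (W i j)) (hW : ⋃ i, ⋃ j, W i j = univ)
    (hWs : ∀ i j, ∃ s : C(W i j, C(I, X)), ∀ x : W i j, s x 0 = x.1.1 ∧ s x 1 = x.1.2) :
    TCCover X (n * m + n + m) := by
  let e : Fin (n * m + n + m + 1) ≃ Fin (n + 1) × Fin (m + 1) :=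
    (finCongr (by ring)).trans finProdFinEquiv.symm
  refine ⟨fun k => W (e k).1 (e k).2, fun k => hWo _ _, ?_, fun k => hWs _ _⟩
  refine iUnion_eq_univ_iff.mpr fun x => ?_
  obtain ⟨i, hi⟩ := iUnion_eq_univ_iff.mp hW x
  obtain ⟨j, hx⟩ := mem_iUnion.mp hi
  exact ⟨e.symm (i, j), by simpa only [Equiv.apply_symm_apply] using hx⟩

theorem tcCover_of_iUnion_eq_univ {n m : ℕ} {Z : Fin (n + 1) → Set (X × X)}
    (hZo : ∀ i, IsOpen (Z i)) (hZ : ⋃ i, Z i = univ) {S : ∀ i, Fin (m + 1) → Set (Z i)}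
    (hSo : ∀ i j, IsOpen (S i j)) (hS : ∀ i, ⋃ j, S i j = univ)
    (hSh : ∀ i j,
      ((fst.restrict (Z i)).restrict (S i j)).Homotopic ((snd.restrict (Z i)).restrict (S i j))) :
    TCCover X (n * m + n + m) := by
  refine tcCover_of_prod (W := fun i j => Subtype.val '' S i j)
    (fun i j => (hZo i).isOpenMap_subtype_val _ (hSo i j)) ?_
    fun i j => (exists_motionPlanner_iff_homotopic _).mpr (hSh i j).restrict_image_val
  refine iUnion_eq_univ_iff.mpr fun x => ?_
  obtain ⟨i, hi⟩ := iUnion_eq_univ_iff.mp hZ x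
  obtain ⟨j, hj⟩ := iUnion_eq_univ_iff.mp (hS i) ⟨x, hi⟩
  exact ⟨i, mem_iUnion.mpr ⟨j, ⟨x, hi⟩, hj, rfl⟩⟩

end Cover

theorem tcCover_of_fibration {E B : Type u} [TopologicalSpace E] [TopologicalSpace B]
    [PathConnectedSpace B] {p : C(E, B)} (hp : IsHurewiczFibration p) (b₀ : B) {n m : ℕ}
    (hn : NullCover (B × B) n) (hm : TCCover ↑(p ⁻¹' {b₀}) m) :
    TCCover E (n * m + n + m) := by
  obtain ⟨U, hUo, hUc, hUn⟩ := hn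
  obtain ⟨V, hVo, hVc, hVs⟩ := hm
  let Z i := p.prodMap p ⁻¹' U i
  -- over `Z i`, the map `p × p` factors through `U i`, which contracts to `(b₀, b₀)`
  have hZ (i) : ((p.prodMap p).restrict (Z i)).Homotopic (const _ (b₀, b₀)) :=
    ((hUn i).homotopic_const (b₀, b₀)).comp (.refl ((p.prodMap p).restrictPreimage (U i)))
  have hZ₁ (i) : (p.comp (fst.restrict (Z i))).Homotopic (const _ b₀) :=
    (Homotopic.refl fst).comp (hZ i)
  have hZ₂ (i) : (p.comp (snd.restrict (Z i))).Homotopic (const _ b₀) :=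
    (Homotopic.refl snd).comp (hZ i)
  choose φ₁ hφ₁ using fun i => hp.exists_homotopic_into_fiber (hZ₁ i)
  choose φ₂ hφ₂ using fun i => hp.exists_homotopic_into_fiber (hZ₂ i)
  refine tcCover_of_iUnion_eq_univ (fun i => (hUo i).preimage (map_continuous _))
    (by simp only [← preimage_iUnion, hUc, preimage_univ])
    (S := fun i j => (φ₁ i).prodMk (φ₂ i) ⁻¹' V j)
    (fun i j => (hVo j).preimage (map_continuous _))
    (fun i => by simp only [← preimage_iUnion, hVc, preimage_univ])
    fun i j => (hφ₁ i).restrict_preimage_prodMk (hφ₂ i)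
      ((exists_motionPlanner_iff_homotopic (V j)).mp (hVs j))

theorem ENat.sInf_image_natCast_add_one_le_mul {R S T : Set ℕ}
    (h : ∀ n ∈ S, ∀ m ∈ T, n * m + n + m ∈ R) :
    sInf (((↑) : ℕ → ℕ∞) '' R) + 1 ≤
      (sInf (((↑) : ℕ → ℕ∞) '' S) + 1) * (sInf (((↑) : ℕ → ℕ∞) '' T) + 1) := by
  rcases S.eq_empty_or_nonempty with rfl | hS
  · simp
  rcases T.eq_empty_or_nonempty with rfl | hT
  · simp
  have hinf {A : Set ℕ} (hA : A.Nonempty) : sInf (((↑) : ℕ → ℕ∞) '' A) = ↑(sInf A) := by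
    rw [ENat.natCast_sInf hA, sInf_image]
  have hR : sInf S * sInf T + sInf S + sInf T ∈ R := h _ (Nat.sInf_mem hS) _ (Nat.sInf_mem hT)
  rw [hinf hS, hinf hT]
  calc sInf (((↑) : ℕ → ℕ∞) '' R) + 1
      ≤ ↑(sInf S * sInf T + sInf S + sInf T) + 1 := by gcongr; exact sInf_le (mem_image_of_mem _ hR)
    _ = (↑(sInf S) + 1) * (↑(sInf T) + 1) := by push_cast; ring

theorem tc_fibration_general {E B : Type u} [TopologicalSpace E] [TopologicalSpace B]
    (p : C(E, B)) (b₀ : B) (hp : IsHurewiczFibration p)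
    [PathConnectedSpace B] :
    TopComplexity E + 1 ≤ (LScat (B × B) + 1) * (TopComplexity ↑(p ⁻¹' {b₀}) + 1) :=
  ENat.sInf_image_natCast_add_one_le_mul fun _ hn _ hm => tcCover_of_fibration hp b₀ hn hm

/-- The Farber-Grant formula for a fibration `F → E → B` of path-connected
CW-complexes: `TC(E) + 1 ≤ (cat(B × B) + 1)(TC(F) + 1)`. -/
theorem tc_fibration {E B : Type u} [TopologicalSpace E] [TopologicalSpace B]
    (p : C(E, B)) (b₀ : B) (hp : IsHurewiczFibration p)
    [PathConnectedSpace E] [PathConnectedSpace B]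
    [PathConnectedSpace ↑(p ⁻¹' {b₀})]
    (hE : HasCWStructure E) (hB : HasCWStructure B)
    (hF : HasCWStructure ↑(p ⁻¹' {b₀})) :
    TopComplexity E + 1 ≤ (LScat (B × B) + 1) * (TopComplexity ↑(p ⁻¹' {b₀}) + 1) :=
  tc_fibration_general p b₀ hp
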